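/- arXiv:1904.08038 — 4 statements merged into one kernel-verified Lean document; each statement's English description precedes it below -/
import Mathlib

section
/- If f is nonnegative, integrable on ℝᵈ with ‖f‖₁ > 0, nonzero, and in Lᵖ, then the rescaled f̃ (as in the scaling lemma) satisfies ℐ(f̃) = (M/‖f‖ₚᵖ) · (1/‖f‖₁^{p(n-1)}) · ℐ(f), where ℐ(g) = ∫_{ℝᵈ} (𝒞ₙ(g)(x))ᵖ dx. -/
open MeasureTheory Real Set

noncomputable def conv {d : ℕ} (f g : EuclideanSpace ℝ (Fin d) → ℝ) :
    EuclideanSpace ℝ (Fin d) → ℝ :=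
  fun x => ∫ y, f y * g (x - y)

/-- `Cconv f n` is the `n`-fold convolution power `𝒞ₙ(f)` for `n ≥ 1`. -/
noncomputable def Cconv {d : ℕ} (f : EuclideanSpace ℝ (Fin d) → ℝ) :
    ℕ → EuclideanSpace ℝ (Fin d) → ℝ
  | 0 => f
  | 1 => f
  | (n + 2) => conv f (Cconv f (n + 1))

/-- The functional `ℐ(g) = ∫ (𝒞ₙ(g))ᵖ`. -/
noncomputable def funcI {d : ℕ} (p : ℝ) (n : ℕ) (f : EuclideanSpace ℝ (Fin d) → ℝ) : ℝ :=
  ∫ x, (Cconv f n x) ^ p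

/-! Convolution is homogeneous in each factor, and dilating both factors by `L` dilates their
convolution and multiplies it by `L ^ d`. Hence `𝒞ₙ(c • f(·/L)) = cⁿ L^{d(n-1)} 𝒞ₙ(f)(·/L)`, and
`ℐ` picks up the factor `(cⁿ L^{d(n-1)})ᵖ L^d`. For `c = (L^d ‖f‖₁)⁻¹` this equals
`((L^d)^{p-1} ‖f‖₁ᵖ)⁻¹ ‖f‖₁^{-p(n-1)}`, and the choice of `L` makes `(L^d)^{p-1} ‖f‖₁ᵖ = ‖f‖ₚᵖ / M`. -/

section Convolution

variable {d : ℕ}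

lemma conv_nonneg {f g : EuclideanSpace ℝ (Fin d) → ℝ} (hf : ∀ x, 0 ≤ f x)
    (hg : ∀ x, 0 ≤ g x) (x : EuclideanSpace ℝ (Fin d)) : 0 ≤ conv f g x :=
  integral_nonneg fun y => mul_nonneg (hf y) (hg _)

lemma Cconv_nonneg {f : EuclideanSpace ℝ (Fin d) → ℝ} (hf : ∀ x, 0 ≤ f x) :
    ∀ n x, 0 ≤ Cconv f n x
  | 0 => hf
  | 1 => hf
  | n + 2 => conv_nonneg hf (Cconv_nonneg hf (n + 1))

lemma conv_const_mul_left (c : ℝ) (f g : EuclideanSpace ℝ (Fin d) → ℝ) :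
    conv (fun x => c * f x) g = fun x => c * conv f g x := by
  ext x
  simp only [conv, mul_assoc, integral_const_mul]

lemma conv_const_mul_right (c : ℝ) (f g : EuclideanSpace ℝ (Fin d) → ℝ) :
    conv f (fun x => c * g x) = fun x => c * conv f g x := by
  ext x
  simp only [conv, mul_left_comm (f _) c, integral_const_mul]

lemma conv_comp_inv_smul {L : ℝ} (hL : 0 ≤ L) (f g : EuclideanSpace ℝ (Fin d) → ℝ) :
    conv (fun x => f (L⁻¹ • x)) (fun x => g (L⁻¹ • x)) =
      fun x => L ^ d * conv f g (L⁻¹ • x) := by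
  ext x
  simp only [conv, smul_sub]
  rw [Measure.integral_comp_inv_smul_of_nonneg volume (fun y => f y * g (L⁻¹ • x - y)) hL,
    finrank_euclideanSpace_fin, smul_eq_mul]

lemma Cconv_const_mul (c : ℝ) (f : EuclideanSpace ℝ (Fin d) → ℝ) :
    ∀ n, Cconv (fun x => c * f x) (n + 1) = fun x => c ^ (n + 1) * Cconv f (n + 1) x
  | 0 => by simp [Cconv]
  | n + 1 => by
    rw [Cconv, Cconv_const_mul c f n, conv_const_mul_left, conv_const_mul_right, Cconv]
    ext x
    ring

lemma Cconv_comp_inv_smul {L : ℝ} (hL : 0 ≤ L) (f : EuclideanSpace ℝ (Fin d) → ℝ) :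
    ∀ n, Cconv (fun x => f (L⁻¹ • x)) (n + 1) =
      fun x => L ^ (d * n) * Cconv f (n + 1) (L⁻¹ • x)
  | 0 => by simp [Cconv]
  | n + 1 => by
    rw [Cconv, Cconv_comp_inv_smul hL f n, conv_const_mul_right, conv_comp_inv_smul hL, Cconv]
    ext x
    ring

lemma funcI_const_mul_comp_inv_smul (p : ℝ) {c L : ℝ} (hc : 0 ≤ c) (hL : 0 ≤ L) (n : ℕ)
    {f : EuclideanSpace ℝ (Fin d) → ℝ} (hf : ∀ x, 0 ≤ f x) :
    funcI p (n + 1) (fun x => c * f (L⁻¹ • x)) =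
      (c ^ (n + 1) * L ^ (d * n)) ^ p * L ^ d * funcI p (n + 1) f := by
  have hcoef : 0 ≤ c ^ (n + 1) * L ^ (d * n) := by positivity
  simp only [funcI, Cconv_const_mul c (fun x => f (L⁻¹ • x)), Cconv_comp_inv_smul hL,
    ← mul_assoc, mul_rpow hcoef (Cconv_nonneg hf _ _), integral_const_mul]
  rw [Measure.integral_comp_inv_smul_of_nonneg volume (fun y => Cconv f (n + 1) y ^ p) hL,
    finrank_euclideanSpace_fin, smul_eq_mul, mul_assoc]

end Convolution

lemma integral_rpow_pos {α : Type*} [MeasurableSpace α] {μ : Measure α} {p : ℝ} (hp : 0 < p)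
    {f : α → ℝ} (hf : 0 ≤ f) (hf_mem : MemLp f (ENNReal.ofReal p) μ)
    (hf_pos : 0 < ∫ x, f x ∂μ) : 0 < ∫ x, f x ^ p ∂μ := by
  have hsupp : Function.support (fun x => f x ^ p) = Function.support f := by
    ext x
    simp [rpow_eq_zero (hf x) hp.ne']
  have hint : Integrable (fun x => f x ^ p) μ := by
    have h := hf_mem.integrable_norm_rpow (by simpa using hp) (by simp)
    simpa only [ENNReal.toReal_ofReal hp.le, norm_of_nonneg (hf _)] using h
  rw [integral_pos_iff_support_of_nonneg (fun x => rpow_nonneg (hf x) p) hint, hsupp,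
    ← integral_pos_iff_support_of_nonneg hf (Integrable.of_integral_ne_zero hf_pos.ne')]
  exact hf_pos

lemma pow_rpow_of_rpow_one_div {A q : ℝ} (hA : 0 ≤ A) (hq : q ≠ 0) {d : ℕ} (hd : d ≠ 0) :
    ((A ^ (1 / (d * q))) ^ d) ^ q = A := by
  rw [← rpow_natCast, ← rpow_mul hA, ← rpow_mul hA]
  field_simp
  exact rpow_one A

lemma inv_mul_pow_succ_mul_pow_rpow {B I : ℝ} (hB : 0 < B) (hI : 0 < I) (p : ℝ) (m : ℕ) :
    (((B * I)⁻¹) ^ (m + 1) * B ^ m) ^ p * B = (B ^ (p - 1) * I ^ p)⁻¹ * (1 / I ^ (p * m)) := by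
  have hBI : ((B * I)⁻¹) ^ (m + 1) * B ^ m = (B * I ^ (m + 1))⁻¹ := by
    rw [inv_pow, mul_pow, pow_succ B m]
    field_simp
  rw [hBI, inv_rpow (by positivity), mul_rpow hB.le (by positivity), rpow_sub_one hB.ne',
    ← rpow_natCast, ← rpow_mul hI.le, Nat.cast_succ, mul_comm _ p, mul_add_one, rpow_add hI]
  field_simp

theorem scaling_functional_general {d : ℕ} (hd : 1 ≤ d) (p M : ℝ) (hp : 1 < p) (hM : 0 < M)
    (n : ℕ) (hn : 1 ≤ n)
    (f : EuclideanSpace ℝ (Fin d) → ℝ)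
    (hf_mem : MemLp f (ENNReal.ofReal p))
    (hf_nonneg : ∀ x, 0 ≤ f x) (hf_pos : 0 < ∫ x, f x) :
    funcI p n
      (fun x => f ((((∫ y, f y ^ p) / (M * (∫ y, f y) ^ p)) ^ (1 / (d * (p - 1))) : ℝ)⁻¹ • x)
        / ((((∫ y, f y ^ p) / (M * (∫ y, f y) ^ p)) ^ (1 / (d * (p - 1))) : ℝ) ^ d * ∫ y, f y))
      = (M / ∫ x, f x ^ p) * (1 / (∫ x, f x) ^ (p * (n - 1 : ℝ))) * funcI p n f := by
  obtain ⟨m, rfl⟩ : ∃ m, n = m + 1 := ⟨n - 1, by omega⟩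
  have hIp : 0 < ∫ x, f x ^ p := integral_rpow_pos (by linarith) hf_nonneg hf_mem hf_pos
  set I := ∫ x, f x
  set A := (∫ x, f x ^ p) / (M * I ^ p)
  have hA : 0 < A := by positivity
  set L := A ^ (1 / (d * (p - 1)))
  have hL : 0 < L := rpow_pos_of_pos hA _
  have hLA : (L ^ d) ^ (p - 1) = A :=
    pow_rpow_of_rpow_one_div hA.le (by linarith) (by omega)
  simp only [div_eq_inv_mul (f _)]
  rw [funcI_const_mul_comp_inv_smul p (by positivity) hL.le m hf_nonneg, pow_mul,
    inv_mul_pow_succ_mul_pow_rpow (by positivity) hf_pos, hLA, Nat.cast_succ, add_sub_cancel_right]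
  have hAI : A * I ^ p = (∫ x, f x ^ p) / M := by
    simp only [A]
    field_simp
  rw [hAI, inv_div]

theorem scaling_functional {d : ℕ} (hd : 1 ≤ d) (p M : ℝ) (hp : 1 < p) (hM : 0 < M)
    (n : ℕ) (hn : 1 ≤ n)
    (f : EuclideanSpace ℝ (Fin d) → ℝ)
    (hf_int : Integrable f) (hf_mem : MemLp f (ENNReal.ofReal p))
    (hf_nonneg : ∀ x, 0 ≤ f x) (hf_pos : 0 < ∫ x, f x) :
    funcI p n
      (fun x => f ((((∫ y, f y ^ p) / (M * (∫ y, f y) ^ p)) ^ (1 / (d * (p - 1))) : ℝ)⁻¹ • x)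
        / ((((∫ y, f y ^ p) / (M * (∫ y, f y) ^ p)) ^ (1 / (d * (p - 1))) : ℝ) ^ d * ∫ y, f y))
      = (M / ∫ x, f x ^ p) * (1 / (∫ x, f x) ^ (p * (n - 1 : ℝ))) * funcI p n f :=
  scaling_functional_general hd p M hp hM n hn f hf_mem hf_nonneg hf_pos
end

section
/- Let f_j, f be nonnegative radially decreasing functions on ℝᵈ with ‖f_j‖₁ ≤ 1, ‖f‖₁ ≤ 1, sup_j ‖f_j‖ₚᵖ ≤ M and ‖f‖ₚᵖ ≤ M for some p > 1, M > 0, and suppose f_j → f μ_d-almost everywhere. Then for every q with 1 < q < p, f_j → f strongly in L^q(ℝᵈ). -/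
/-!
A nonnegative radially decreasing `F` satisfies `μ(B(0, ‖x‖)) F(x) ≤ ∫ F`, and likewise for `F ^ p`.
Hence every function of the family is bounded by `min (C ‖x‖^(-d)) (C' ‖x‖^(-d/p))`, whose `q`-th
power is integrable exactly when `1 < q < p`: the `L¹` branch controls the tail since `dq > d`,
the `Lᵖ` branch the singularity at the origin since `dq/p < d`. Dominated convergence concludes.
-/

open MeasureTheory Real Set Filter Metric Module

theorem MeasureTheory.MemLp.integrable_rpow_of_nonneg {α : Type*} [MeasurableSpace α] {μ : Measure α}
    {F : α → ℝ} (hF0 : ∀ x, 0 ≤ F x) {p : ℝ} (hp : 0 < p) (hF : MemLp F (ENNReal.ofReal p) μ) :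
    Integrable (fun x => F x ^ p) μ := by
  refine (hF.integrable_norm_rpow (by simpa using hp) ENNReal.ofReal_ne_top).congr (.of_forall ?_)
  simp [ENNReal.toReal_ofReal hp.le, Real.norm_eq_abs, abs_of_nonneg (hF0 _)]

section RadialDecreasing

variable {E : Type*} [NormedAddCommGroup E] [NormedSpace ℝ E] [FiniteDimensional ℝ E]
  [MeasurableSpace E] [BorelSpace E] {μ : Measure E} [μ.IsAddHaarMeasure]

theorem measureReal_ball_mul_le_integral {F : E → ℝ} (hF0 : ∀ x, 0 ≤ F x)
    (hF : ∀ x y : E, ‖x‖ ≤ ‖y‖ → F y ≤ F x) (hint : Integrable F μ) (x : E) :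
    μ.real (ball 0 ‖x‖) * F x ≤ ∫ y, F y ∂μ :=
  calc μ.real (ball 0 ‖x‖) * F x = ∫ _ in ball 0 ‖x‖, F x ∂μ := by
        rw [setIntegral_const, smul_eq_mul]
    _ ≤ ∫ y in ball 0 ‖x‖, F y ∂μ :=
        setIntegral_mono_on (integrableOn_const measure_ball_lt_top.ne) hint.integrableOn
          measurableSet_ball fun y hy => hF y x (mem_ball_zero_iff.1 hy).le
    _ ≤ ∫ y, F y ∂μ := setIntegral_le_integral hint (.of_forall hF0)

theorem rpow_le_of_integral_rpow_le {F : E → ℝ} (hF0 : ∀ x, 0 ≤ F x)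
    (hF : ∀ x y : E, ‖x‖ ≤ ‖y‖ → F y ≤ F x) {s q A : ℝ} (hs : 0 < s) (hq : 0 ≤ q)
    (hint : Integrable (fun y => F y ^ s) μ) (hA : ∫ y, F y ^ s ∂μ ≤ A) {x : E} (hx : x ≠ 0) :
    F x ^ q ≤ (A / μ.real (ball 0 1)) ^ (q / s) * ‖x‖ ^ (-(finrank ℝ E * q / s)) := by
  set c := μ.real (ball (0 : E) 1)
  set n := finrank ℝ E
  have hc : 0 < c := ENNReal.toReal_pos (measure_ball_pos μ 0 one_pos).ne' measure_ball_lt_top.ne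
  have hx' : 0 < ‖x‖ := norm_pos_iff.2 hx
  have hA0 : 0 ≤ A := (integral_nonneg fun y => rpow_nonneg (hF0 y) s).trans hA
  have hball : μ.real (ball 0 ‖x‖) = c * ‖x‖ ^ n := by
    rw [measureReal_def, Measure.addHaar_ball_of_pos μ 0 hx', ENNReal.toReal_mul,
      ENNReal.toReal_ofReal (by positivity), mul_comm]
    rfl
  have hFs : F x ^ s ≤ A / c * ‖x‖ ^ (-(n : ℝ)) := by
    have h := measureReal_ball_mul_le_integral (fun y => rpow_nonneg (hF0 y) s)
      (fun x y h => rpow_le_rpow (hF0 y) (hF x y h) hs.le) hint x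
    rw [hball] at h
    rw [rpow_neg hx'.le, rpow_natCast, ← div_eq_mul_inv, div_div, le_div_iff₀ (by positivity)]
    linarith
  calc F x ^ q = (F x ^ s) ^ (q / s) := by rw [← rpow_mul (hF0 x), mul_div_cancel₀ _ hs.ne']
    _ ≤ (A / c * ‖x‖ ^ (-(n : ℝ))) ^ (q / s) :=
        rpow_le_rpow (rpow_nonneg (hF0 x) s) hFs (by positivity)
    _ = (A / c) ^ (q / s) * ‖x‖ ^ (-(n * q / s)) := by
        rw [mul_rpow (by positivity) (by positivity), ← rpow_mul hx'.le]
        ring_nf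

theorem integrableOn_compl_ball_of_norm_le_rpow {F : Type*} [NormedAddCommGroup F] {f : E → F}
    {C β r : ℝ} (hr : 0 < r) (hβ : finrank ℝ E < β)
    (h_decay : ∀ᵐ x ∂μ.restrict (ball 0 r)ᶜ, ‖f x‖ ≤ C * ‖x‖ ^ (-β))
    (h_meas : AEStronglyMeasurable f μ) :
    IntegrableOn f (ball 0 r)ᶜ μ := by
  have hβ0 : 0 < β := (Nat.cast_nonneg _).trans_lt hβ
  refine (((integrable_one_add_norm hβ).const_mul (C * (1 + r⁻¹) ^ β)).integrableOn).mono'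
    h_meas.restrict ?_
  filter_upwards [h_decay, ae_restrict_mem measurableSet_ball.compl] with x hfx hx
  have hrx : r ≤ ‖x‖ := by simpa using hx
  have hx0 : 0 < ‖x‖ := hr.trans_le hrx
  have hC : 0 ≤ C := nonneg_of_mul_nonneg_left ((norm_nonneg _).trans hfx) (by positivity)
  have hcmp : (1 + ‖x‖) / (1 + r⁻¹) ≤ ‖x‖ := by
    have h1 : 1 ≤ ‖x‖ * r⁻¹ := by rwa [← div_eq_mul_inv, le_div_iff₀ hr, one_mul]
    rw [div_le_iff₀ (by positivity), mul_add, mul_one]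
    linarith
  calc ‖f x‖ ≤ C * ‖x‖ ^ (-β) := hfx
    _ ≤ C * ((1 + ‖x‖) / (1 + r⁻¹)) ^ (-β) :=
        mul_le_mul_of_nonneg_left (rpow_le_rpow_of_nonpos (by positivity) hcmp (by linarith)) hC
    _ = C * (1 + r⁻¹) ^ β * (1 + ‖x‖) ^ (-β) := by
        rw [div_rpow (by positivity) (by positivity), rpow_neg (by positivity : (0:ℝ) ≤ 1 + r⁻¹)]
        field_simp

theorem integrable_of_norm_le_rpow_of_norm_le_rpow {F : Type*} [NormedAddCommGroup F] {f : E → F}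
    {C C' α β : ℝ} (hd : 1 ≤ finrank ℝ E) (hα : α < finrank ℝ E) (hβ : finrank ℝ E < β)
    (h_zero : ∀ᵐ x ∂μ, ‖f x‖ ≤ C * ‖x‖ ^ (-α)) (h_infty : ∀ᵐ x ∂μ, ‖f x‖ ≤ C' * ‖x‖ ^ (-β))
    (h_meas : AEStronglyMeasurable f μ) :
    Integrable f μ := by
  rw [← integrableOn_univ, ← union_compl_self (ball (0 : E) 1)]
  exact (integrableOn_ball_of_norm_le_rpow hd hα (ae_restrict_of_ae h_zero) h_meas).union
    (integrableOn_compl_ball_of_norm_le_rpow one_pos hβ (ae_restrict_of_ae h_infty) h_meas)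

variable (μ) in
noncomputable def radialMajorant (A B p q : ℝ) (x : E) : ℝ :=
  min ((A / μ.real (ball 0 1)) ^ q * ‖x‖ ^ (-(finrank ℝ E * q)))
    ((B / μ.real (ball 0 1)) ^ (q / p) * ‖x‖ ^ (-(finrank ℝ E * q / p)))

theorem rpow_le_radialMajorant {F : E → ℝ} (hF0 : ∀ x, 0 ≤ F x)
    (hF : ∀ x y : E, ‖x‖ ≤ ‖y‖ → F y ≤ F x) {A B p q : ℝ} (hp : 0 < p) (hq : 0 ≤ q)
    (hint : Integrable F μ) (hmem : MemLp F (ENNReal.ofReal p) μ) (hA : ∫ y, F y ∂μ ≤ A)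
    (hB : ∫ y, F y ^ p ∂μ ≤ B) {x : E} (hx : x ≠ 0) :
    F x ^ q ≤ radialMajorant μ A B p q x := by
  refine le_min ?_
    (rpow_le_of_integral_rpow_le hF0 hF hp hq (hmem.integrable_rpow_of_nonneg hF0 hp) hB hx)
  simpa using
    rpow_le_of_integral_rpow_le hF0 hF one_pos hq (by simpa using hint) (by simpa using hA) hx

theorem integrable_radialMajorant (hd : 1 ≤ finrank ℝ E) {A B p q : ℝ} (hA : 0 ≤ A) (hB : 0 ≤ B)
    (hq : 1 < q) (hqp : q < p) : Integrable (radialMajorant μ A B p q) μ := by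
  have hp : 0 < p := one_pos.trans (hq.trans hqp)
  have hd' : (1 : ℝ) ≤ finrank ℝ E := by exact_mod_cast hd
  have hc : 0 ≤ μ.real (ball (0 : E) 1) := measureReal_nonneg
  have h_norm : ∀ x, ‖radialMajorant μ A B p q x‖ = radialMajorant μ A B p q x :=
    fun x => norm_of_nonneg (by unfold radialMajorant; positivity)
  refine integrable_of_norm_le_rpow_of_norm_le_rpow hd ?_ ?_
    (.of_forall fun x => (h_norm x).trans_le (min_le_right _ _))
    (.of_forall fun x => (h_norm x).trans_le (min_le_left _ _))
    (by unfold radialMajorant; fun_prop)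
  · rw [div_lt_iff₀ hp]
    nlinarith
  · nlinarith

end RadialDecreasing

theorem abs_sub_rpow_le {u v w q : ℝ} (hu : 0 ≤ u) (hv : 0 ≤ v) (hq : 0 ≤ q) (huw : u ^ q ≤ w)
    (hvw : v ^ q ≤ w) : |u - v| ^ q ≤ w := by
  have h : |u - v| ≤ max u v :=
    abs_sub_le_iff.2 ⟨by linarith [le_max_left u v], by linarith [le_max_right u v]⟩
  calc |u - v| ^ q ≤ max u v ^ q := rpow_le_rpow (abs_nonneg _) h hq
    _ ≤ w := by rcases max_choice u v with h | h <;> rwa [h]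

theorem strong_Lq_convergence_general {d : ℕ} (hd : 1 ≤ d) (p M : ℝ) (hM : 0 < M)
    (f : ℕ → EuclideanSpace ℝ (Fin d) → ℝ) (g : EuclideanSpace ℝ (Fin d) → ℝ)
    (hf_meas : ∀ j, Measurable (f j)) (hg_meas : Measurable g)
    (hf_nonneg : ∀ j x, 0 ≤ f j x) (hg_nonneg : ∀ x, 0 ≤ g x)
    (hf_raddec : ∀ j, ∀ x y : EuclideanSpace ℝ (Fin d), ‖x‖ ≤ ‖y‖ → f j y ≤ f j x)
    (hg_raddec : ∀ x y : EuclideanSpace ℝ (Fin d), ‖x‖ ≤ ‖y‖ → g y ≤ g x)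
    (hf_int : ∀ j, Integrable (f j)) (hg_int : Integrable g)
    (hf_memp : ∀ j, MemLp (f j) (ENNReal.ofReal p)) (hg_memp : MemLp g (ENNReal.ofReal p))
    (hf1 : ∀ j, (∫ x, f j x) ≤ 1) (hg1 : (∫ x, g x) ≤ 1)
    (hfp : ∀ j, (∫ x, f j x ^ p) ≤ M) (hgp : (∫ x, g x ^ p) ≤ M)
    (hae : ∀ᵐ x, Tendsto (fun j => f j x) atTop (nhds (g x))) :
    ∀ q : ℝ, 1 < q → q < p →
      Tendsto (fun j => ∫ x, |f j x - g x| ^ q) atTop (nhds 0) := by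
  intro q hq hqp
  have hq0 : 0 < q := one_pos.trans hq
  have hp0 : 0 < p := hq0.trans hqp
  set bound := radialMajorant (volume : Measure (EuclideanSpace ℝ (Fin d))) 1 M p q
  have h_int : Integrable bound :=
    integrable_radialMajorant (by rwa [finrank_euclideanSpace_fin]) zero_le_one hM.le hq hqp
  have : Nontrivial (EuclideanSpace ℝ (Fin d)) := by
    have : Nonempty (Fin d) := ⟨⟨0, hd⟩⟩
    infer_instance
  have h_dom : ∀ j, ∀ᵐ x, ‖|f j x - g x| ^ q‖ ≤ bound x := by
    intro j
    filter_upwards [compl_mem_ae_iff.2 (measure_singleton 0)] with x hx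
    rw [norm_of_nonneg (by positivity)]
    exact abs_sub_rpow_le (hf_nonneg j x) (hg_nonneg x) hq0.le
      (rpow_le_radialMajorant (hf_nonneg j) (hf_raddec j) hp0 hq0.le (hf_int j) (hf_memp j)
        (hf1 j) (hfp j) hx)
      (rpow_le_radialMajorant hg_nonneg hg_raddec hp0 hq0.le hg_int hg_memp hg1 hgp hx)
  have h_lim : ∀ᵐ x, Tendsto (fun j => |f j x - g x| ^ q) atTop (nhds 0) := by
    filter_upwards [hae] with x hx
    simpa [zero_rpow hq0.ne'] using ((hx.sub_const (g x)).abs).rpow_const (p := q) (.inr hq0.le)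
  have h_meas : ∀ j, AEStronglyMeasurable (fun x => |f j x - g x| ^ q) :=
    fun j => (((hf_meas j).sub hg_meas).abs.pow_const q).aestronglyMeasurable
  simpa using tendsto_integral_of_dominated_convergence bound h_meas h_int h_dom h_lim

theorem strong_Lq_convergence {d : ℕ} (hd : 1 ≤ d) (p M : ℝ) (hp : 1 < p) (hM : 0 < M)
    (f : ℕ → EuclideanSpace ℝ (Fin d) → ℝ) (g : EuclideanSpace ℝ (Fin d) → ℝ)
    (hf_meas : ∀ j, Measurable (f j)) (hg_meas : Measurable g)
    (hf_nonneg : ∀ j x, 0 ≤ f j x) (hg_nonneg : ∀ x, 0 ≤ g x)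
    (hf_raddec : ∀ j, ∀ x y : EuclideanSpace ℝ (Fin d), ‖x‖ ≤ ‖y‖ → f j y ≤ f j x)
    (hg_raddec : ∀ x y : EuclideanSpace ℝ (Fin d), ‖x‖ ≤ ‖y‖ → g y ≤ g x)
    (hf_int : ∀ j, Integrable (f j)) (hg_int : Integrable g)
    (hf_memp : ∀ j, MemLp (f j) (ENNReal.ofReal p)) (hg_memp : MemLp g (ENNReal.ofReal p))
    (hf1 : ∀ j, (∫ x, f j x) ≤ 1) (hg1 : (∫ x, g x) ≤ 1)
    (hfp : ∀ j, (∫ x, f j x ^ p) ≤ M) (hgp : (∫ x, g x ^ p) ≤ M)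
    (hae : ∀ᵐ x, Tendsto (fun j => f j x) atTop (nhds (g x))) :
    ∀ q : ℝ, 1 < q → q < p →
      Tendsto (fun j => ∫ x, |f j x - g x| ^ q) atTop (nhds 0) :=
  strong_Lq_convergence_general hd p M hM f g hf_meas hg_meas hf_nonneg hg_nonneg hf_raddec
    hg_raddec hf_int hg_int hf_memp hg_memp hf1 hg1 hfp hgp hae
end

section
/- Let Q ∈ ℱ (nonnegative, ‖Q‖₁ = 1, ‖Q‖ₚᵖ = M) satisfy the Euler-Lagrange equation 𝒯(𝒞_{n−1}(Q)) ∗ (𝒞ₙ(Q))^{p−1} = (Λ/(Mn)) Q^{p−1} + Λ(n−1)/n on {Q > 0}. Then ∫_{ℝᵈ} (𝒞ₙ(Q)(x))ᵖ dx = Λ, i.e. ℐ(Q) = Λ. -/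
open MeasureTheory Real Set

/-- `convIter f k h = 𝒞ₖ(f) ∗ h`, with the convention `𝒞₀(f) ∗ h = h`. -/
noncomputable def convIter {d : ℕ} (f : EuclideanSpace ℝ (Fin d) → ℝ) :
    ℕ → (EuclideanSpace ℝ (Fin d) → ℝ) → EuclideanSpace ℝ (Fin d) → ℝ
  | 0, h => h
  | (k + 1), h => conv f (convIter f k h)

/-!
Integrating the Euler–Lagrange equation against `Q` (on `{Q = 0}` both sides vanish after
multiplication by `Q`) and moving the `n - 1` reflected convolutions to the other factor with the
adjoint identity `∫ a · (𝒯f ∗ g) = ∫ (f ∗ a) · g` turns the left side into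
`∫ 𝒞ₙ(Q) · 𝒞ₙ(Q)^{p-1} = ∫ 𝒞ₙ(Q)^p`, while the right side integrates to
`(Λ/(Mn)) M + Λ(n-1)/n = Λ`.

All exchanges of integrals are done for the `ℝ≥0∞`-valued convolution `⋆ₗ`, where Tonelli needs no
integrability. The real convolutions are the `toReal` of these as soon as the inner functions are
a.e. finite, which Young's inequality `‖f ⋆ₗ g‖_r ≤ ‖g‖_r` (for `∫ f = 1`, via Jensen) provides:
with `r = 1` for the powers `𝒞ₖ(Q)`, and with `r` the conjugate exponent of `p` for the iterated
reflected convolutions of `𝒞ₙ(Q)^{p-1}`.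
-/

open scoped ENNReal

theorem ENNReal.ofReal_mul_eq_of_toReal_eq {q a b p : ℝ} {D : ℝ≥0∞} (hq : 0 ≤ q) (hp : 0 < p)
    (ha : 0 < a) (hb : 0 ≤ b) (hD : 0 < q → D.toReal = a * q ^ (p - 1) + b) :
    ENNReal.ofReal q * D = ENNReal.ofReal (a * q ^ p + b * q) := by
  obtain rfl | hq := hq.eq_or_lt
  · simp [Real.zero_rpow hp.ne']
  have hD_ne : D ≠ ∞ := by
    rintro rfl
    have hpos : 0 < a * q ^ (p - 1) + b := by positivity
    rw [ENNReal.toReal_top] at hD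
    linarith [hD hq]
  rw [← ENNReal.ofReal_toReal hD_ne, hD hq, ← ENNReal.ofReal_mul hq.le, Real.rpow_sub_one hq.ne']
  congr 1
  field_simp

namespace MeasureTheory

theorem rpow_lintegral_mul_le_lintegral_mul_rpow {α : Type*} [MeasurableSpace α] {ν : Measure α}
    {w h : α → ℝ≥0∞} (hw : AEMeasurable w ν) (hh : AEMeasurable h ν) (hw1 : ∫⁻ a, w a ∂ν = 1)
    {p : ℝ} (hp : 1 ≤ p) : (∫⁻ a, w a * h a ∂ν) ^ p ≤ ∫⁻ a, w a * h a ^ p ∂ν := by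
  obtain rfl | hp := hp.eq_or_lt
  · simp
  set q := p.conjExponent
  have hpq : p.HolderConjugate q := .conjExponent hp
  have hsplit : ∀ a, w a * h a = w a ^ (1 / q) * (w a ^ (1 / p) * h a) := fun a => by
    rw [← mul_assoc, ← ENNReal.rpow_add_of_nonneg _ _ hpq.symm.one_div_nonneg hpq.one_div_nonneg,
      one_div, one_div, hpq.symm.inv_add_inv_eq_one, ENNReal.rpow_one]
  have hholder := ENNReal.lintegral_mul_le_Lp_mul_Lq ν hpq.symm
    (hw.pow_const (1 / q)) ((hw.pow_const (1 / p)).mul hh)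
  have hw_q : ∀ a, (w a ^ (1 / q)) ^ q = w a := fun a => by
    rw [← ENNReal.rpow_mul, one_div_mul_cancel hpq.symm.ne_zero, ENNReal.rpow_one]
  have hwh_p : ∀ a, (w a ^ (1 / p) * h a) ^ p = w a * h a ^ p := fun a => by
    rw [ENNReal.mul_rpow_of_nonneg _ _ hpq.nonneg, ← ENNReal.rpow_mul,
      one_div_mul_cancel hpq.ne_zero, ENNReal.rpow_one]
  simp only [Pi.mul_apply, hw_q, hwh_p, hw1, ENNReal.one_rpow, one_mul, ← hsplit] at hholder
  calc (∫⁻ a, w a * h a ∂ν) ^ p ≤ ((∫⁻ a, w a * h a ^ p ∂ν) ^ (1 / p)) ^ p :=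
        ENNReal.rpow_le_rpow hholder hpq.nonneg
    _ = ∫⁻ a, w a * h a ^ p ∂ν := by
        rw [← ENNReal.rpow_mul, one_div_mul_cancel hpq.ne_zero, ENNReal.rpow_one]

theorem lintegral_ofReal_mul_eq_of_ae_toReal_eq {α : Type*} [MeasurableSpace α] {μ : Measure α}
    {Q : α → ℝ} {D : α → ℝ≥0∞} {a b p : ℝ} (hQ0 : ∀ x, 0 ≤ Q x) (hQ : Integrable Q μ)
    (hQp : Integrable (fun x => Q x ^ p) μ) (hp : 0 < p) (ha : 0 < a) (hb : 0 ≤ b)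
    (hD : ∀ᵐ x ∂μ, 0 < Q x → (D x).toReal = a * Q x ^ (p - 1) + b) :
    ∫⁻ x, ENNReal.ofReal (Q x) * D x ∂μ
      = ENNReal.ofReal (a * ∫ x, Q x ^ p ∂μ + b * ∫ x, Q x ∂μ) := by
  have h_nonneg : ∀ x, 0 ≤ a * Q x ^ p + b * Q x := fun x =>
    add_nonneg (mul_nonneg ha.le (Real.rpow_nonneg (hQ0 x) p)) (mul_nonneg hb (hQ0 x))
  rw [← integral_const_mul, ← integral_const_mul, ← integral_add (hQp.const_mul a) (hQ.const_mul b),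
    ofReal_integral_eq_lintegral_ofReal (f := fun x => a * Q x ^ p + b * Q x)
      ((hQp.const_mul a).add (hQ.const_mul b)) (.of_forall h_nonneg)]
  exact lintegral_congr_ae
    (hD.mono fun x hx => ENNReal.ofReal_mul_eq_of_toReal_eq (hQ0 x) hp ha hb hx)

theorem integral_rpow_eq_toReal_lintegral_rpow {α : Type*} [MeasurableSpace α] {μ : Measure α}
    {f : α → ℝ} {G : α → ℝ≥0∞} (hG : AEMeasurable G μ) {p : ℝ} (hGp : ∫⁻ x, G x ^ p ∂μ ≠ ∞)
    (hf : f =ᵐ[μ] fun x => (G x).toReal) :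
    ∫ x, f x ^ p ∂μ = (∫⁻ x, G x ^ p ∂μ).toReal := by
  rw [← integral_toReal (hG.pow_const p) (ae_lt_top' (hG.pow_const p) hGp)]
  refine integral_congr_ae ?_
  filter_upwards [hf] with x hx
  rw [hx, ENNReal.toReal_rpow]

section AddGroup

variable {G : Type*} [MeasurableSpace G] [AddGroup G] [MeasurableAdd₂ G] [MeasurableNeg G]
  {μ : Measure G} [μ.IsAddLeftInvariant] [SFinite μ] {f g : G → ℝ≥0∞}

theorem lintegral_lconvolution (hf : AEMeasurable f μ) (hg : AEMeasurable g μ) :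
    ∫⁻ x, (f ⋆ₗ[μ] g) x ∂μ = (∫⁻ x, f x ∂μ) * ∫⁻ x, g x ∂μ := by
  simp only [lconvolution_def]
  rw [lintegral_lintegral_swap (by fun_prop), ← lintegral_mul_const'' _ hf]
  refine lintegral_congr fun y => ?_
  have hg_y : AEMeasurable (fun x => g (-y + x)) μ :=
    hg.comp_quasiMeasurePreserving (measurePreserving_add_left μ (-y)).quasiMeasurePreserving
  rw [lintegral_const_mul'' _ hg_y, lintegral_add_left_eq_self g (-y)]

theorem rpow_lconvolution_le_lconvolution_rpow (hf : AEMeasurable f μ) (hg : AEMeasurable g μ)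
    (hf1 : ∫⁻ x, f x ∂μ = 1) {p : ℝ} (hp : 1 ≤ p) (x : G) :
    (f ⋆ₗ[μ] g) x ^ p ≤ (f ⋆ₗ[μ] fun y => g y ^ p) x :=
  rpow_lintegral_mul_le_lintegral_mul_rpow hf (by fun_prop) hf1 hp

theorem aemeasurable_lconvolution_iterate (hf : AEMeasurable f μ) (hg : AEMeasurable g μ)
    (k : ℕ) : AEMeasurable ((f ⋆ₗ[μ] ·)^[k] g) μ := by
  induction k with
  | zero => exact hg
  | succ k ih =>
    rw [Function.iterate_succ_apply']
    exact aemeasurable_lconvolution hf ih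

theorem lintegral_lconvolution_iterate_rpow_le (hf : AEMeasurable f μ) (hg : AEMeasurable g μ)
    (hf1 : ∫⁻ x, f x ∂μ = 1) {p : ℝ} (hp : 1 ≤ p) (k : ℕ) :
    ∫⁻ x, (f ⋆ₗ[μ] ·)^[k] g x ^ p ∂μ ≤ ∫⁻ x, g x ^ p ∂μ := by
  induction k with
  | zero => rfl
  | succ k ih =>
    have hk := aemeasurable_lconvolution_iterate hf hg k
    calc ∫⁻ x, (f ⋆ₗ[μ] ·)^[k + 1] g x ^ p ∂μ
        ≤ ∫⁻ x, (f ⋆ₗ[μ] fun y => (f ⋆ₗ[μ] ·)^[k] g y ^ p) x ∂μ := by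
          rw [Function.iterate_succ_apply']
          exact lintegral_mono fun x => rpow_lconvolution_le_lconvolution_rpow hf hk hf1 hp x
      _ = ∫⁻ x, (f ⋆ₗ[μ] ·)^[k] g x ^ p ∂μ := by
          rw [lintegral_lconvolution hf (hk.pow_const p), hf1, one_mul]
      _ ≤ ∫⁻ x, g x ^ p ∂μ := ih

theorem ae_lconvolution_iterate_lt_top (hf : AEMeasurable f μ) (hg : AEMeasurable g μ)
    (hf1 : ∫⁻ x, f x ∂μ = 1) {p : ℝ} (hp : 1 ≤ p) (hgp : ∫⁻ x, g x ^ p ∂μ ≠ ∞) (k : ℕ) :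
    ∀ᵐ x ∂μ, (f ⋆ₗ[μ] ·)^[k] g x < ∞ := by
  have hk := aemeasurable_lconvolution_iterate hf hg k
  filter_upwards [ae_lt_top' (hk.pow_const p)
    ((lintegral_lconvolution_iterate_rpow_le hf hg hf1 hp k).trans_lt hgp.lt_top).ne] with x hx
  exact (ENNReal.rpow_lt_top_iff_of_pos (by linarith)).mp hx

end AddGroup

section AddCommGroup

variable {G : Type*} [MeasurableSpace G] [AddCommGroup G] [MeasurableNeg G]
  {μ : Measure G} [μ.IsNegInvariant]

theorem lintegral_mul_eq_lconvolution_zero (a g : G → ℝ≥0∞) :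
    ∫⁻ x, a x * g x ∂μ = ((fun y => a (-y)) ⋆ₗ[μ] g) 0 := by
  simp only [lconvolution_def, add_zero]
  exact (lintegral_neg_eq_self (fun y => a y * g y)).symm

theorem lconvolution_comp_neg (f g : G → ℝ≥0∞) :
    ((fun y => f (-y)) ⋆ₗ[μ] fun y => g (-y)) = fun x => (f ⋆ₗ[μ] g) (-x) := by
  ext x
  simp only [lconvolution_def]
  rw [← lintegral_neg_eq_self]
  simp only [neg_neg, neg_add]

variable [MeasurableAdd₂ G] [μ.IsAddLeftInvariant] [SFinite μ] {f g a : G → ℝ≥0∞}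

/-- Both sides are `((a ∘ neg) ⋆ₗ (f ∘ neg) ⋆ₗ g) 0`, by associativity, commutativity and
`lconvolution_comp_neg`. -/
theorem lintegral_mul_lconvolution_neg (hf : AEMeasurable f μ) (hg : AEMeasurable g μ)
    (ha : AEMeasurable a μ) :
    ∫⁻ x, a x * ((fun y => f (-y)) ⋆ₗ[μ] g) x ∂μ = ∫⁻ x, (f ⋆ₗ[μ] a) x * g x ∂μ := by
  rw [lintegral_mul_eq_lconvolution_zero, lintegral_mul_eq_lconvolution_zero,
    lconvolution_assoc₀ (by fun_prop) (by fun_prop) hg, lconvolution_comm (f := fun y => a (-y)),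
    lconvolution_comp_neg]

theorem lintegral_mul_lconvolution_neg_iterate (hf : AEMeasurable f μ) (hg : AEMeasurable g μ)
    (k : ℕ) (ha : AEMeasurable a μ) :
    ∫⁻ x, a x * ((fun y => f (-y)) ⋆ₗ[μ] ·)^[k] g x ∂μ
      = ∫⁻ x, (f ⋆ₗ[μ] ·)^[k] a x * g x ∂μ := by
  induction k generalizing a with
  | zero => rfl
  | succ k ih =>
    rw [Function.iterate_succ_apply', Function.iterate_succ_apply,
      lintegral_mul_lconvolution_neg hf
        (aemeasurable_lconvolution_iterate (by fun_prop) hg k) ha,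
      ih (aemeasurable_lconvolution hf ha)]

theorem lintegral_mul_lconvolution_neg_iterate_rpow_sub_one (hf : AEMeasurable f μ) {p : ℝ}
    (hp : 1 ≤ p) (k : ℕ) :
    ∫⁻ x, f x * ((fun y => f (-y)) ⋆ₗ[μ] ·)^[k] (fun z => (f ⋆ₗ[μ] ·)^[k] f z ^ (p - 1)) x ∂μ
      = ∫⁻ x, (f ⋆ₗ[μ] ·)^[k] f x ^ p ∂μ := by
  rw [lintegral_mul_lconvolution_neg_iterate hf
    ((aemeasurable_lconvolution_iterate hf hf k).pow_const _) k hf]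
  refine lintegral_congr fun x => ?_
  calc _ = (f ⋆ₗ[μ] ·)^[k] f x ^ (1 + (p - 1)) := by
        rw [ENNReal.rpow_add_of_nonneg _ _ zero_le_one (by linarith), ENNReal.rpow_one]
    _ = _ := by rw [add_sub_cancel]

end AddCommGroup

end MeasureTheory

section Euclidean

variable {d : ℕ}

theorem Cconv_succ_eq_convIter (f : EuclideanSpace ℝ (Fin d) → ℝ) (k : ℕ) :
    Cconv f (k + 1) = convIter f k f := by
  induction k with
  | zero => rfl
  | succ k ih => exact congrArg (conv f) ih

theorem conv_eq_toReal_lconvolution {w g : EuclideanSpace ℝ (Fin d) → ℝ}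
    {G : EuclideanSpace ℝ (Fin d) → ℝ≥0∞} (hw : AEMeasurable w) (hw0 : ∀ y, 0 ≤ w y)
    (hG : AEMeasurable G) (hG_lt : ∀ᵐ z, G z < ∞) (hg : g =ᵐ[volume] fun z => (G z).toReal)
    (x : EuclideanSpace ℝ (Fin d)) :
    conv w g x = (((fun y => ENNReal.ofReal (w y)) ⋆ₗ G) x).toReal := by
  have hx : Measure.QuasiMeasurePreserving (fun y => x - y) volume volume :=
    (Measure.measurePreserving_sub_left volume x).quasiMeasurePreserving
  rw [lconvolution_def, ← integral_toReal (by fun_prop)]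
  · refine integral_congr_ae ?_
    filter_upwards [hx.ae hg] with y hy
    rw [ENNReal.toReal_mul, ENNReal.toReal_ofReal (hw0 y), neg_add_eq_sub, hy]
  · filter_upwards [hx.ae hG_lt] with y hy
    rw [neg_add_eq_sub]
    exact ENNReal.mul_lt_top ENNReal.ofReal_lt_top hy

theorem convIter_ae_eq_toReal {w g : EuclideanSpace ℝ (Fin d) → ℝ}
    {G : EuclideanSpace ℝ (Fin d) → ℝ≥0∞} (hw : AEMeasurable w) (hw0 : ∀ y, 0 ≤ w y)
    (hw1 : ∫⁻ y, ENNReal.ofReal (w y) = 1) (hG : AEMeasurable G) {r : ℝ} (hr : 1 ≤ r)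
    (hGr : ∫⁻ z, G z ^ r ≠ ∞) (hg : g =ᵐ[volume] fun z => (G z).toReal) (k : ℕ) :
    convIter w k g =ᵐ[volume]
      fun x => (((fun y => ENNReal.ofReal (w y)) ⋆ₗ ·)^[k] G x).toReal := by
  induction k with
  | zero => exact hg
  | succ k ih =>
    refine .of_forall fun x => ?_
    rw [Function.iterate_succ_apply']
    exact conv_eq_toReal_lconvolution hw hw0
      (aemeasurable_lconvolution_iterate hw.ennreal_ofReal hG k)
      (ae_lconvolution_iterate_lt_top hw.ennreal_ofReal hG hw1 hr hGr k) ih x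

theorem Cconv_ae_eq_toReal {Q : EuclideanSpace ℝ (Fin d) → ℝ} (hQ : AEMeasurable Q)
    (hQ0 : ∀ x, 0 ≤ Q x) (hQ1 : ∫⁻ x, ENNReal.ofReal (Q x) = 1) (k : ℕ) :
    Cconv Q (k + 1) =ᵐ[volume] fun x =>
      (((fun y => ENNReal.ofReal (Q y)) ⋆ₗ ·)^[k] (fun y => ENNReal.ofReal (Q y)) x).toReal := by
  rw [Cconv_succ_eq_convIter]
  exact convIter_ae_eq_toReal hQ hQ0 hQ1 hQ.ennreal_ofReal le_rfl (by simp [hQ1])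
    (.of_forall fun x => (ENNReal.toReal_ofReal (hQ0 x)).symm) k

theorem convIter_rpow_sub_one_ae_eq_toReal {w g : EuclideanSpace ℝ (Fin d) → ℝ}
    {G : EuclideanSpace ℝ (Fin d) → ℝ≥0∞} (hw : AEMeasurable w) (hw0 : ∀ y, 0 ≤ w y)
    (hw1 : ∫⁻ y, ENNReal.ofReal (w y) = 1) (hG : AEMeasurable G) {p : ℝ} (hp : 1 < p)
    (hGp : ∫⁻ z, G z ^ p ≠ ∞) (hg : g =ᵐ[volume] fun z => (G z).toReal) (k : ℕ) :
    convIter w k (fun z => g z ^ (p - 1)) =ᵐ[volume] fun x =>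
      (((fun y => ENNReal.ofReal (w y)) ⋆ₗ ·)^[k] (fun z => G z ^ (p - 1)) x).toReal := by
  have hpq : p.HolderConjugate p.conjExponent := .conjExponent hp
  refine convIter_ae_eq_toReal hw hw0 hw1 (hG.pow_const _) hpq.symm.lt.le ?_ ?_ k
  · simpa only [← ENNReal.rpow_mul, hpq.sub_one_mul_conj] using hGp
  · filter_upwards [hg] with z hz
    rw [hz, ENNReal.toReal_rpow]

end Euclidean

theorem euler_lagrange_implies_extremal_value_general {d : ℕ}
    (p M Λ : ℝ) (hp : 1 < p) (hM : 0 < M) (hΛ : 0 < Λ) (n : ℕ) (hn : 1 ≤ n)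
    (Q : EuclideanSpace ℝ (Fin d) → ℝ)
    (hQ_nonneg : ∀ x, 0 ≤ Q x)
    (hQ1 : (∫ x, Q x) = 1) (hQp : (∫ x, Q x ^ p) = M)
    -- The Euler–Lagrange equation `𝒯(𝒞_{n-1}(Q)) ∗ (𝒞ₙ(Q))^{p-1} = (Λ/(Mn)) Q^{p-1} + Λ(n-1)/n`
    -- on `{Q > 0}`, where `𝒯(𝒞_{n-1}(Q)) ∗ h = 𝒞_{n-1}(𝒯(Q)) ∗ h` is realized as `convIter`:
    (hEL : ∀ x, 0 < Q x →
      convIter (fun y => Q (-y)) (n - 1) (fun z => (Cconv Q n z) ^ (p - 1)) x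
        = Λ / (M * n) * (Q x) ^ (p - 1) + Λ * (n - 1 : ℝ) / n) :
    (∫ x, (Cconv Q n x) ^ p) = Λ := by
  obtain ⟨m, rfl⟩ : ∃ m, n = m + 1 := ⟨n - 1, by omega⟩
  rw [Nat.add_sub_cancel] at hEL
  have hQ : Integrable Q := .of_integral_ne_zero (by simp [hQ1])
  have hQp_int : Integrable (fun x => Q x ^ p) := .of_integral_ne_zero (by simp [hQp, hM.ne'])
  set F := fun x => ENNReal.ofReal (Q x)
  have hF : AEMeasurable F := hQ.aemeasurable.ennreal_ofReal
  have hF1 : ∫⁻ x, F x = 1 := by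
    rw [← ofReal_integral_eq_lintegral_ofReal hQ (.of_forall hQ_nonneg), hQ1, ENNReal.ofReal_one]
  have hFp : ∫⁻ x, F x ^ p ≠ ∞ := by
    simpa only [F, ENNReal.ofReal_rpow_of_nonneg (hQ_nonneg _) (by linarith : 0 ≤ p)]
      using hQp_int.lintegral_lt_top.ne
  set C := (F ⋆ₗ ·)^[m] F
  have hC : Cconv Q (m + 1) =ᵐ[volume] fun x => (C x).toReal :=
    Cconv_ae_eq_toReal hQ.aemeasurable hQ_nonneg hF1 m
  have hCp : ∫⁻ x, C x ^ p ≠ ∞ :=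
    ((lintegral_lconvolution_iterate_rpow_le hF hF hF1 hp.le m).trans_lt hFp.lt_top).ne
  have hD := convIter_rpow_sub_one_ae_eq_toReal (w := fun y => Q (-y)) (by fun_prop)
    (fun y => hQ_nonneg _) ((lintegral_neg_eq_self F).trans hF1)
    (aemeasurable_lconvolution_iterate hF hF m) hp hCp hC m
  have hCΛ : ∫⁻ x, C x ^ p = ENNReal.ofReal Λ := by
    rw [← lintegral_mul_lconvolution_neg_iterate_rpow_sub_one hF hp.le m,
      lintegral_ofReal_mul_eq_of_ae_toReal_eq (a := Λ / (M * (m + 1 : ℕ)))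
        (b := Λ * ((m + 1 : ℕ) - 1 : ℝ) / (m + 1 : ℕ)) hQ_nonneg hQ hQp_int (by linarith)
        (by positivity) (by simp only [Nat.cast_add_one, add_sub_cancel_right]; positivity)
        (hD.mono fun x hx hQx => hx.symm.trans (hEL x hQx)),
      hQp, hQ1]
    congr 1
    field_simp
    ring
  rw [integral_rpow_eq_toReal_lintegral_rpow (aemeasurable_lconvolution_iterate hF hF m) hCp hC,
    hCΛ, ENNReal.toReal_ofReal hΛ.le]

theorem euler_lagrange_implies_extremal_value {d : ℕ} (hd : 1 ≤ d)
    (p M Λ : ℝ) (hp : 1 < p) (hM : 0 < M) (hΛ : 0 < Λ) (n : ℕ) (hn : 1 ≤ n)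
    (Q : EuclideanSpace ℝ (Fin d) → ℝ)
    (hQ_int : Integrable Q) (hQ_mem : MemLp Q (ENNReal.ofReal p))
    (hQ_nonneg : ∀ x, 0 ≤ Q x)
    (hQ1 : (∫ x, Q x) = 1) (hQp : (∫ x, Q x ^ p) = M)
    -- The Euler–Lagrange equation `𝒯(𝒞_{n-1}(Q)) ∗ (𝒞ₙ(Q))^{p-1} = (Λ/(Mn)) Q^{p-1} + Λ(n-1)/n`
    -- on `{Q > 0}`, where `𝒯(𝒞_{n-1}(Q)) ∗ h = 𝒞_{n-1}(𝒯(Q)) ∗ h` is realized as `convIter`: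
    (hEL : ∀ x, 0 < Q x →
      convIter (fun y => Q (-y)) (n - 1) (fun z => (Cconv Q n z) ^ (p - 1)) x
        = Λ / (M * n) * (Q x) ^ (p - 1) + Λ * (n - 1 : ℝ) / n) :
    (∫ x, (Cconv Q n x) ^ p) = Λ :=
  euler_lagrange_implies_extremal_value_general p M Λ hp hM hΛ n hn Q hQ_nonneg hQ1 hQp hEL
end

section
/- Let G(x) = α(1 − x²)₊ on ℝ for some α > 0. Then the threefold convolution G ∗ G ∗ G is not equal to any function of the form aG + b (with constants a, b) on [−1,1]. Equivalently, G ∗ G ∗ G restricted to a neighborhood of 0 is not a quadratic polynomial. -/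
/-!
On `[-1, 1]` the threefold convolution is an explicit even polynomial of degree eight. With
`P t = (1 - t²)₊`, one finds `(P ∗ P)(u) = 16/15 - 4/3 u² + 2/3 |u|³ - |u|⁵/30` for `|u| ≤ 2`, and
then `(P ∗ P ∗ P)(x) = 47/40 - 5/6 x² + x⁴/4 - x⁶/30 + x⁸/2520` for `|x| ≤ 1`; the convolution of
`G = α P` is `α³` times this. Every `h = a G + b` is affine in `x²` on `[-1, 1]`, so
`4 h(1/2) = 3 h(0) + h(1)`, whereas for `G ∗ G ∗ G` the two sides differ by `401/2560 α³ ≠ 0`.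
-/

open MeasureTheory Real Set

/-- Convolution of functions on `ℝ` with respect to Lebesgue measure. -/
noncomputable def conv1 (f g : ℝ → ℝ) : ℝ → ℝ :=
  fun x => ∫ y, f y * g (x - y)

theorem conv1_eq_convolution (f g : ℝ → ℝ) :
    conv1 f g = convolution f g (ContinuousLinearMap.mul ℝ ℝ) :=
  rfl

theorem conv1_const_mul_const_mul (a b : ℝ) (f g : ℝ → ℝ) :
    conv1 (fun t => a * f t) (fun t => b * g t) = fun x => a * b * conv1 f g x := by
  funext x
  simp only [conv1, ← integral_const_mul]
  congr 1 with y
  ring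

theorem conv1_eq_intervalIntegral {f g : ℝ → ℝ} {x a b : ℝ}
    (h : ∀ y ∉ Ioc a b, f y * g (x - y) = 0) :
    conv1 f g x = ∫ y in a..b, f y * g (x - y) :=
  (intervalIntegral.integral_eq_integral_of_support_subset fun y hy =>
    by_contra fun hy' => hy (h y hy')).symm

theorem conv1_eq_add_of_even {f g : ℝ → ℝ} (hf : Continuous f) (hg : Continuous g)
    (hf_neg : ∀ t, f (-t) = f t) (hg_neg : ∀ t, g (-t) = g t)
    (hg_zero : ∀ t, 1 ≤ |t| → g t = 0) (x : ℝ) :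
    conv1 f g x =
      (∫ y in 0..(x + 1), f y * g (x - y)) + ∫ y in 0..(-x + 1), f y * g (-x - y) := by
  have hint (a b : ℝ) : IntervalIntegrable (fun y => f y * g (x - y)) volume a b :=
    Continuous.intervalIntegrable (by fun_prop) a b
  have hleft : ∫ y in (x - 1)..0, f y * g (x - y) = ∫ y in 0..(-x + 1), f y * g (-x - y) := by
    calc ∫ y in (x - 1)..0, f y * g (x - y)
        = ∫ y in -(-x + 1)..(-0), f y * g (x - y) := by rw [neg_add, neg_neg, neg_zero]; ring_nf
      _ = ∫ y in 0..(-x + 1), f (-y) * g (x - -y) :=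
          (intervalIntegral.integral_comp_neg (fun y => f y * g (x - y))).symm
      _ = ∫ y in 0..(-x + 1), f y * g (-x - y) := by
          congr 1 with y
          rw [hf_neg, ← hg_neg (-x - y)]
          ring_nf
  rw [conv1_eq_intervalIntegral (a := x - 1) (b := x + 1),
    ← intervalIntegral.integral_add_adjacent_intervals (hint _ 0) (hint 0 _), hleft, add_comm]
  intro y hy
  rw [mem_Ioc, not_and_or, not_lt, not_le] at hy
  rw [hg_zero, mul_zero]
  rcases hy with hy | hy
  · exact le_abs.2 (Or.inl (by linarith))
  · exact le_abs.2 (Or.inr (by linarith))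

def truncParabola (t : ℝ) : ℝ := max (1 - t ^ 2) 0

theorem truncParabola_of_abs_le {t : ℝ} (ht : |t| ≤ 1) : truncParabola t = 1 - t ^ 2 :=
  max_eq_left (by nlinarith [abs_nonneg t, sq_abs t])

theorem truncParabola_of_one_le_abs {t : ℝ} (ht : 1 ≤ |t|) : truncParabola t = 0 :=
  max_eq_right (by nlinarith [sq_abs t])

theorem truncParabola_neg (t : ℝ) : truncParabola (-t) = truncParabola t := by
  simp only [truncParabola, neg_sq]

theorem continuous_truncParabola : Continuous truncParabola := by
  unfold truncParabola
  fun_prop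

theorem hasCompactSupport_truncParabola : HasCompactSupport truncParabola :=
  HasCompactSupport.intro (isCompact_Icc (a := -1) (b := 1)) fun _ ht =>
    truncParabola_of_one_le_abs (lt_of_not_ge fun h => ht (abs_le.1 h)).le

theorem continuous_conv1_truncParabola_self :
    Continuous (conv1 truncParabola truncParabola) := by
  rw [conv1_eq_convolution]
  exact hasCompactSupport_truncParabola.continuous_convolution_right _
    continuous_truncParabola.locallyIntegrable continuous_truncParabola

theorem conv1_truncParabola_self_neg (u : ℝ) :
    conv1 truncParabola truncParabola (-u) = conv1 truncParabola truncParabola u := by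
  rw [conv1_eq_convolution]
  exact convolution_neg_of_neg_eq _ (.of_forall truncParabola_neg) (.of_forall truncParabola_neg)

theorem conv1_truncParabola_self_of_mem_Icc {u : ℝ} (hu : u ∈ Icc 0 2) :
    conv1 truncParabola truncParabola u = 16/15 - 4/3 * u ^ 2 + 2/3 * u ^ 3 - u ^ 5 / 30 := by
  obtain ⟨hu0, hu2⟩ := hu
  rw [conv1_eq_intervalIntegral (a := u - 1) (b := 1)]
  · calc ∫ y in (u - 1)..1, truncParabola y * truncParabola (u - y)
        = ∫ y in (u - 1)..1, (1 - y ^ 2) * (1 - (u - y) ^ 2) := by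
          refine intervalIntegral.integral_congr fun y hy => ?_
          rw [uIcc_of_le (by linarith), mem_Icc] at hy
          rw [truncParabola_of_abs_le (abs_le.2 ⟨by linarith, hy.2⟩),
            truncParabola_of_abs_le (abs_le.2 ⟨by linarith, by linarith⟩)]
      _ = 16/15 - 4/3 * u ^ 2 + 2/3 * u ^ 3 - u ^ 5 / 30 := by
          ring_nf
          simp (disch := exact Continuous.intervalIntegrable (by fun_prop) _ _) only
            [intervalIntegral.integral_add, intervalIntegral.integral_sub,
              intervalIntegral.integral_mul_const, integral_pow, integral_id,
              intervalIntegral.integral_const, smul_eq_mul]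
          ring
  · intro y hy
    rw [mem_Ioc, not_and_or, not_lt, not_le] at hy
    rcases hy with hy | hy
    · rw [truncParabola_of_one_le_abs (t := u - y) (le_abs.2 (Or.inl (by linarith))), mul_zero]
    · rw [truncParabola_of_one_le_abs (le_abs.2 (Or.inl hy.le)), zero_mul]

theorem integral_conv1_truncParabola_self_mul {s : ℝ} (hs : s ∈ Icc (-1) 1) :
    ∫ y in 0..(s + 1), conv1 truncParabola truncParabola y * truncParabola (s - y)
      = 47/80 + 23/35 * s - 5/12 * s ^ 2 - 2/5 * s ^ 3 + 1/8 * s ^ 4 + 1/45 * s ^ 5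
        - 1/60 * s ^ 6 + 1/5040 * s ^ 8 := by
  obtain ⟨hs1, hs2⟩ := hs
  calc ∫ y in 0..(s + 1), conv1 truncParabola truncParabola y * truncParabola (s - y)
      = ∫ y in 0..(s + 1),
          (16/15 - 4/3 * y ^ 2 + 2/3 * y ^ 3 - y ^ 5 / 30) * (1 - (s - y) ^ 2) := by
        refine intervalIntegral.integral_congr fun y hy => ?_
        rw [uIcc_of_le (by linarith), mem_Icc] at hy
        rw [conv1_truncParabola_self_of_mem_Icc ⟨hy.1, by linarith⟩,
          truncParabola_of_abs_le (abs_le.2 ⟨by linarith, by linarith⟩)]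
    _ = 47/80 + 23/35 * s - 5/12 * s ^ 2 - 2/5 * s ^ 3 + 1/8 * s ^ 4 + 1/45 * s ^ 5
          - 1/60 * s ^ 6 + 1/5040 * s ^ 8 := by
        ring_nf
        simp (disch := exact Continuous.intervalIntegrable (by fun_prop) _ _) only
          [intervalIntegral.integral_add, intervalIntegral.integral_const_mul,
            intervalIntegral.integral_mul_const, integral_pow, integral_id,
            intervalIntegral.integral_const, smul_eq_mul]
        ring

theorem conv1_conv1_truncParabola_of_mem_Icc {x : ℝ} (hx : x ∈ Icc (-1) 1) :
    conv1 (conv1 truncParabola truncParabola) truncParabola x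
      = 47/40 - 5/6 * x ^ 2 + 1/4 * x ^ 4 - 1/30 * x ^ 6 + 1/2520 * x ^ 8 := by
  have hx' : -x ∈ Icc (-1 : ℝ) 1 := ⟨by linarith [hx.2], by linarith [hx.1]⟩
  rw [conv1_eq_add_of_even continuous_conv1_truncParabola_self continuous_truncParabola
      conv1_truncParabola_self_neg truncParabola_neg (fun _ => truncParabola_of_one_le_abs),
    integral_conv1_truncParabola_self_mul hx, integral_conv1_truncParabola_self_mul hx']
  ring

theorem generalized_gaussian_not_critical (α : ℝ) (hα : 0 < α) :
    ¬ ∃ a b : ℝ, ∀ x ∈ Icc (-1 : ℝ) 1,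
        conv1 (conv1 (fun t => α * max (1 - t ^ 2) 0) (fun t => α * max (1 - t ^ 2) 0))
          (fun t => α * max (1 - t ^ 2) 0) x
          = a * (α * max (1 - x ^ 2) 0) + b := by
  rintro ⟨a, b, hab⟩
  have hG : (fun t : ℝ => α * max (1 - t ^ 2) 0) = fun t => α * truncParabola t := rfl
  have key (x : ℝ) (hx : x ∈ Icc (-1 : ℝ) 1) :
      α ^ 3 * (47/40 - 5/6 * x ^ 2 + 1/4 * x ^ 4 - 1/30 * x ^ 6 + 1/2520 * x ^ 8)
        = a * (α * max (1 - x ^ 2) 0) + b := by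
    rw [← hab x hx]
    simp only [hG, conv1_const_mul_const_mul, conv1_conv1_truncParabola_of_mem_Icc hx]
    ring
  have h0 := key 0 (by norm_num)
  have hhalf := key (1/2) (by norm_num)
  have h1 := key 1 (by norm_num)
  norm_num at h0 hhalf h1
  have : α ^ 3 * (401/2560) = 0 := by linarith
  exact absurd this (by positivity)
end
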